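/- arXiv:2504.06809 — 4 statements merged into one kernel-verified Lean document; each statement's English description precedes it below -/
import Mathlib

section
/- Let L > 0 and let x, ℓ₂ be real numbers with 0 ≤ x ≤ L and 0 ≤ ℓ₂ ≤ L. Then the series ∑_{n=1}^{∞} cos(nπx/L)·cos(nπℓ₂/L)/n² converges and (2L/π²)·∑_{n=1}^{∞} cos(nπx/L)·cos(nπℓ₂/L)/n² = (x² + ℓ₂²)/(2L) + L/3 − max(x, ℓ₂). -/
open Real

lemma cos_series_aux {s : ℝ} (hs : s ∈ Set.Icc (0:ℝ) 1) :
    HasSum (fun n : ℕ => 1 / (n:ℝ)^2 * Real.cos (2 * π * n * s))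
      (π^2 * (s^2 - s + 1/6)) := by
  have h := hasSum_one_div_nat_pow_mul_cos (k := 1) one_ne_zero hs
  have hB : (Polynomial.map (algebraMap ℚ ℝ) (Polynomial.bernoulli 2)).eval s
      = s^2 - s + 1/6 := by
    simp [Polynomial.bernoulli, Finset.sum_range_succ, Polynomial.eval_finset_sum,
      bernoulli, bernoulli'_two]
    ring
  have hc : ((-1 : ℝ)) ^ (1 + 1) * (2 * π) ^ (2 * 1) / 2 / (((2 * 1).factorial : ℕ) : ℝ) *
      (Polynomial.map (algebraMap ℚ ℝ) (Polynomial.bernoulli (2 * 1))).eval s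
      = π^2 * (s^2 - s + 1/6) := by
    rw [show (2 * 1) = 2 from rfl, hB,
      show (((2 : ℕ).factorial : ℕ) : ℝ) = 2 by norm_num [Nat.factorial]]
    ring
  rw [hc] at h
  simpa using h

/-- Fourier series of the stationary leak profile: for `0 ≤ x ≤ L` and `0 ≤ ℓ₂ ≤ L`,
the series `∑_{n=1}^∞ cos(nπx/L)·cos(nπℓ₂/L)/n²` converges, and
`(2L/π²) · ∑_{n=1}^∞ cos(nπx/L)·cos(nπℓ₂/L)/n² = (x²+ℓ₂²)/(2L) + L/3 − max(x,ℓ₂)`;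
equivalently the sum equals `(π²/(2L))` times the right-hand side. -/
theorem fourier_series_leak_profile (L : ℝ) (hL : 0 < L)
    (x ℓ₂ : ℝ) (hx0 : 0 ≤ x) (hxL : x ≤ L) (hℓ0 : 0 ≤ ℓ₂) (hℓL : ℓ₂ ≤ L) :
    HasSum
      (fun n : ℕ =>
        Real.cos (((n : ℝ) + 1) * π * x / L) * Real.cos (((n : ℝ) + 1) * π * ℓ₂ / L)
          / ((n : ℝ) + 1) ^ 2)
      ((π ^ 2 / (2 * L)) * ((x ^ 2 + ℓ₂ ^ 2) / (2 * L) + L / 3 - max x ℓ₂)) := by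
  set u : ℝ := x / L with hu
  set v : ℝ := ℓ₂ / L with hv
  have hu0 : 0 ≤ u := div_nonneg hx0 hL.le
  have hu1 : u ≤ 1 := (div_le_one hL).mpr hxL
  have hv0 : 0 ≤ v := div_nonneg hℓ0 hL.le
  have hv1 : v ≤ 1 := (div_le_one hL).mpr hℓL
  set s₁ : ℝ := |u - v| / 2 with hs₁def
  set s₂ : ℝ := (u + v) / 2 with hs₂def
  have hs₁ : s₁ ∈ Set.Icc (0:ℝ) 1 := by
    constructor
    · positivity
    · rw [hs₁def, div_le_one (by norm_num : (0:ℝ) < 2)]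
      rw [abs_le]; constructor <;> linarith
  have hs₂ : s₂ ∈ Set.Icc (0:ℝ) 1 := by
    constructor
    · positivity
    · rw [hs₂def, div_le_one (by norm_num : (0:ℝ) < 2)]; linarith
  have h1 := cos_series_aux hs₁
  have h2 := cos_series_aux hs₂
  have h3 := (h1.add h2).div_const 2
  -- identify the summand
  have hterm : ∀ n : ℕ,
      (1 / (n:ℝ)^2 * Real.cos (2 * π * n * s₁) + 1 / (n:ℝ)^2 * Real.cos (2 * π * n * s₂)) / 2
        = Real.cos ((n:ℝ) * π * u) * Real.cos ((n:ℝ) * π * v) / (n:ℝ)^2 := by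
    intro n
    have hc1 : Real.cos (2 * π * n * s₁) = Real.cos ((n:ℝ) * π * u - (n:ℝ) * π * v) := by
      rw [hs₁def]
      have : 2 * π * (n:ℝ) * (|u - v| / 2) = |(n:ℝ) * π * (u - v)| := by
        rw [abs_mul, abs_of_nonneg (by positivity : (0:ℝ) ≤ (n:ℝ) * π)]
        ring
      rw [this, Real.cos_abs]
      ring_nf
    have hc2 : Real.cos (2 * π * n * s₂) = Real.cos ((n:ℝ) * π * u + (n:ℝ) * π * v) := by
      rw [hs₂def]; congr 1; ring
    rw [hc1, hc2, Real.cos_sub, Real.cos_add]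
    ring
  set S : ℝ := (π^2 * (s₁^2 - s₁ + 1/6) + π^2 * (s₂^2 - s₂ + 1/6)) / 2 with hSdef
  have hmain : HasSum (fun n : ℕ => Real.cos ((n:ℝ) * π * u) * Real.cos ((n:ℝ) * π * v) / (n:ℝ)^2)
      S := by
    have := h3
    simp only [hterm] at this
    exact this
  -- shift the index by one (term at 0 vanishes)
  have hf0 : Real.cos ((0:ℝ) * π * u) * Real.cos ((0:ℝ) * π * v) / ((0:ℕ):ℝ)^2 = 0 := by
    norm_num
  have hshift : HasSum (fun n : ℕ =>
      Real.cos (((n:ℝ) + 1) * π * u) * Real.cos (((n:ℝ) + 1) * π * v) / ((n:ℝ) + 1)^2) S := by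
    have h4 := (hasSum_nat_add_iff
      (f := fun n : ℕ => Real.cos ((n:ℝ) * π * u) * Real.cos ((n:ℝ) * π * v) / (n:ℝ)^2) 1).mpr
      (by simpa using hmain)
    refine h4.congr_fun fun n => ?_
    push_cast
    ring_nf
  -- match the argument forms and the value
  have harg : ∀ n : ℕ, Real.cos (((n:ℝ) + 1) * π * x / L) * Real.cos (((n:ℝ) + 1) * π * ℓ₂ / L)
      / ((n:ℝ) + 1)^2
      = Real.cos (((n:ℝ) + 1) * π * u) * Real.cos (((n:ℝ) + 1) * π * v) / ((n:ℝ) + 1)^2 := by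
    intro n
    rw [hu, hv]
    congr 2 <;> ring
  have hval : S = (π ^ 2 / (2 * L)) * ((x ^ 2 + ℓ₂ ^ 2) / (2 * L) + L / 3 - max x ℓ₂) := by
    have habs : |u - v| = |x - ℓ₂| / L := by
      rw [hu, hv, div_sub_div_same, abs_div, abs_of_pos hL]
    rw [hSdef, hs₁def, hs₂def, habs, hu, hv]
    rcases le_total x ℓ₂ with h | h
    · rw [abs_of_nonpos (by linarith), max_eq_right h]
      field_simp
      ring
    · rw [abs_of_nonneg (by linarith), max_eq_left h]
      field_simp
      ring
  rw [hval] at hshift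
  exact hshift.congr_fun harg
end

section
/- Let L > 0 and ℓ₂ ∈ (0, L). Suppose F : [0, L] → ℝ is continuous, is twice differentiable on (0, ℓ₂) and on (ℓ₂, L) with F''(x) = 1/L on both intervals, has one-sided derivatives F'(0⁺) = 0 and F'(L⁻) = 0, and satisfies ∫₀ᴸ F(x) dx = 0. Then F(x) = (x² + ℓ₂²)/(2L) + L/3 − max(x, ℓ₂) for all x ∈ [0, L]. -/
/-!
On each side of the leak `F'' = 1/L` forces `F` to be a parabola of curvature `1/L`, and continuity
at `ℓ₂` makes the two parabolas meet there. The Neumann conditions fix their slopes at `0` and at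
`L`, and the zero mean fixes the one remaining additive constant `F 0`.
-/

open Set

noncomputable def parabola (a value slope curv x : ℝ) : ℝ :=
  value + slope * (x - a) + curv * (x - a) ^ 2 / 2

section Parabola

variable (a v s k : ℝ)

@[simp]
lemma parabola_self : parabola a v s k a = v := by
  simp [parabola]

lemma hasDerivAt_parabola (x : ℝ) :
    HasDerivAt (parabola a v s k) (s + k * (x - a)) x := by
  have hx : HasDerivAt (fun x => x - a) 1 x := (hasDerivAt_id x).sub_const a
  exact (((hx.const_mul s).const_add v).add ((hx.pow 2).const_mul k |>.div_const 2)).congr_deriv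
    (by ring)

lemma integral_parabola (b : ℝ) :
    ∫ x in a..b, parabola a v s k x = v * (b - a) + s * (b - a) ^ 2 / 2 + k * (b - a) ^ 3 / 6 := by
  have hderiv : ∀ x ∈ uIcc a b, HasDerivAt
      (fun x => v * (x - a) + s * (x - a) ^ 2 / 2 + k * (x - a) ^ 3 / 6) (parabola a v s k x) x := by
    intro x _
    have hx : HasDerivAt (fun x => x - a) 1 x := (hasDerivAt_id x).sub_const a
    exact (((hx.const_mul v).add ((hx.pow 2).const_mul s |>.div_const 2)).add
      ((hx.pow 3).const_mul k |>.div_const 6)).congr_deriv (by simp only [parabola]; ring)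
  rw [intervalIntegral.integral_eq_sub_of_hasDerivAt hderiv
    (Continuous.intervalIntegrable (by unfold parabola; fun_prop) a b)]
  ring

end Parabola

lemma integral_eq_of_eqOn_parabola {f : ℝ → ℝ} {a b v s k : ℝ} (hab : a ≤ b)
    (hf : EqOn f (parabola a v s k) (Icc a b)) :
    ∫ x in a..b, f x = v * (b - a) + s * (b - a) ^ 2 / 2 + k * (b - a) ^ 3 / 6 := by
  rw [intervalIntegral.integral_congr (by rwa [uIcc_of_le hab]), integral_parabola]

lemma ContinuousOn.eq_left_of_hasDerivAt_zero {f : ℝ → ℝ} {a b : ℝ}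
    (hf : ContinuousOn f (Icc a b)) (hf' : ∀ x ∈ Ioo a b, HasDerivAt f 0 x) :
    ∀ x ∈ Icc a b, f x = f a := by
  rintro x ⟨hax, hxb⟩
  rcases hax.eq_or_lt with rfl | hax
  · rfl
  obtain ⟨c, -, hc⟩ := exists_hasDerivAt_eq_slope f (fun _ => 0) hax
    (hf.mono (Icc_subset_Icc_right hxb)) fun y hy => hf' y ⟨hy.1, hy.2.trans_le hxb⟩
  rw [eq_comm, div_eq_zero_iff, sub_eq_zero] at hc
  exact hc.resolve_right (sub_ne_zero.2 hax.ne')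

lemma ContinuousOn.exists_eqOn_parabola {f f' : ℝ → ℝ} {a b k : ℝ}
    (hf : ContinuousOn f (Icc a b)) (hf' : ∀ x ∈ Ioo a b, HasDerivAt f (f' x) x)
    (hf'' : ∀ x ∈ Ioo a b, HasDerivAt f' k x) :
    ∃ s, EqOn f (parabola a (f a) s k) (Icc a b) := by
  obtain ⟨s, hs⟩ : ∃ s, EqOn f' (fun x => k * (x - a) + s) (Ioo a b) :=
    isOpen_Ioo.exists_eq_add_of_deriv_eq isPreconnected_Ioo
      (fun x hx => (hf'' x hx).differentiableAt.differentiableWithinAt)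
      (by fun_prop)
      fun x hx => by simp [(hf'' x hx).deriv]
  refine ⟨s, fun x hx => ?_⟩
  have hdiff : ∀ y ∈ Ioo a b, HasDerivAt (fun y => f y - parabola a (f a) s k y) 0 y := by
    intro y hy
    exact ((hf' y hy).sub (hasDerivAt_parabola a (f a) s k y)).congr_deriv (by rw [hs hy]; ring)
  have := (hf.sub (by unfold parabola; fun_prop)).eq_left_of_hasDerivAt_zero hdiff x hx
  simpa [sub_eq_zero] using this

lemma HasDerivWithinAt.eq_of_eqOn_Icc_left {f g : ℝ → ℝ} {a b f₀ g₀ : ℝ} (hab : a < b)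
    (hfg : EqOn f g (Icc a b)) (hf : HasDerivWithinAt f f₀ (Ici a) a) (hg : HasDerivAt g g₀ a) :
    f₀ = g₀ :=
  (uniqueDiffOn_Ici a a self_mem_Ici).eq_deriv _ hf <| hg.hasDerivWithinAt.congr_of_eventuallyEq
    (Filter.eventuallyEq_of_mem (Icc_mem_nhdsGE hab) hfg) (hfg (left_mem_Icc.2 hab.le))

lemma HasDerivWithinAt.eq_of_eqOn_Icc_right {f g : ℝ → ℝ} {a b f₀ g₀ : ℝ} (hab : a < b)
    (hfg : EqOn f g (Icc a b)) (hf : HasDerivWithinAt f f₀ (Iic b) b) (hg : HasDerivAt g g₀ b) :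
    f₀ = g₀ :=
  (uniqueDiffOn_Iic b b self_mem_Iic).eq_deriv _ hf <| hg.hasDerivWithinAt.congr_of_eventuallyEq
    (Filter.eventuallyEq_of_mem (Icc_mem_nhdsLE hab) hfg) (hfg (right_mem_Icc.2 hab.le))

/-- Uniqueness of the stationary leak profile: a function `F` continuous on `[0,L]`,
twice differentiable on `(0,ℓ₂)` and `(ℓ₂,L)` with `F'' = 1/L` on both pieces,
with vanishing one-sided derivatives `F'(0⁺) = 0`, `F'(L⁻) = 0` and zero mean,
must equal `(x²+ℓ₂²)/(2L) + L/3 − max(x,ℓ₂)` on `[0,L]`. -/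
theorem leak_profile_uniqueness (L : ℝ) (hL : 0 < L)
    (ℓ₂ : ℝ) (hℓ : ℓ₂ ∈ Set.Ioo (0 : ℝ) L)
    (F F' : ℝ → ℝ)
    (hcont : ContinuousOn F (Set.Icc 0 L))
    (hF'left : ∀ x ∈ Set.Ioo (0 : ℝ) ℓ₂, HasDerivAt F (F' x) x)
    (hF''left : ∀ x ∈ Set.Ioo (0 : ℝ) ℓ₂, HasDerivAt F' (1 / L) x)
    (hF'right : ∀ x ∈ Set.Ioo ℓ₂ L, HasDerivAt F (F' x) x)
    (hF''right : ∀ x ∈ Set.Ioo ℓ₂ L, HasDerivAt F' (1 / L) x)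
    (hleft : HasDerivWithinAt F 0 (Set.Ici (0 : ℝ)) 0)
    (hright : HasDerivWithinAt F 0 (Set.Iic L) L)
    (hmean : ∫ x in (0 : ℝ)..L, F x = 0) :
    ∀ x ∈ Set.Icc (0 : ℝ) L,
      F x = (x ^ 2 + ℓ₂ ^ 2) / (2 * L) + L / 3 - max x ℓ₂ := by
  obtain ⟨hℓ0, hℓL⟩ := hℓ
  have hcontl := hcont.mono (Icc_subset_Icc_right hℓL.le)
  have hcontr := hcont.mono (Icc_subset_Icc_left hℓ0.le)
  obtain ⟨s, hs⟩ := hcontl.exists_eqOn_parabola hF'left hF''left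
  obtain ⟨t, ht⟩ := hcontr.exists_eqOn_parabola hF'right hF''right
  have hs0 : s = 0 := by
    simpa using (hleft.eq_of_eqOn_Icc_left hℓ0 hs (hasDerivAt_parabola ..)).symm
  have htL : t = ℓ₂ / L - 1 := by
    have := hright.eq_of_eqOn_Icc_right hℓL ht (hasDerivAt_parabola ..)
    field_simp at this ⊢
    linarith
  have hFℓ : F ℓ₂ = parabola 0 (F 0) s (1 / L) ℓ₂ := hs (right_mem_Icc.2 hℓ0.le)
  have hsplit : (∫ x in (0 : ℝ)..ℓ₂, F x) + ∫ x in ℓ₂..L, F x = 0 :=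
    (intervalIntegral.integral_add_adjacent_intervals (hcontl.intervalIntegrable_of_Icc hℓ0.le)
      (hcontr.intervalIntegrable_of_Icc hℓL.le)).trans hmean
  rw [integral_eq_of_eqOn_parabola hℓ0.le hs, integral_eq_of_eqOn_parabola hℓL.le ht,
    hFℓ, hs0, htL] at hsplit
  have hF0 : F 0 = ℓ₂ ^ 2 / (2 * L) + L / 3 - ℓ₂ := by
    simp only [parabola] at hsplit
    field_simp at hsplit ⊢
    apply mul_left_cancel₀ (show 2 * L ≠ 0 by positivity)
    linear_combination hsplit
  intro x hx
  rcases le_total x ℓ₂ with hxℓ | hℓx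
  · rw [hs ⟨hx.1, hxℓ⟩, max_eq_right hxℓ, hs0, hF0]
    simp only [parabola]
    ring
  · rw [ht ⟨hℓx, hx.2⟩, max_eq_left hℓx, hFℓ, hs0, htL, hF0]
    simp only [parabola]
    ring
end

section
/- Let L > 0 and define, for ℓ₂ ∈ [0, L], the leak profile F_{ℓ₂}(x) = (x² + ℓ₂²)/(2L) + L/3 − max(x, ℓ₂). Then F_{ℓ₂}(0) − F_{ℓ₂}(L) = L/2 − ℓ₂ for every ℓ₂ ∈ [0, L]. Consequently, the map ℓ₂ ↦ F_{ℓ₂}(0) − F_{ℓ₂}(L) is injective on [0, L], and the leak location is recovered by ℓ₂ = L/2 − (F_{ℓ₂}(0) − F_{ℓ₂}(L)). -/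
/-- Leak localization from end pressure drops: for the stationary leak profile
`F_{ℓ₂}(x) = (x²+ℓ₂²)/(2L) + L/3 − max(x,ℓ₂)`, the difference of end values is
`F_{ℓ₂}(0) − F_{ℓ₂}(L) = L/2 − ℓ₂`; hence `ℓ₂ ↦ F_{ℓ₂}(0) − F_{ℓ₂}(L)` is
injective on `[0,L]` and `ℓ₂ = L/2 − (F_{ℓ₂}(0) − F_{ℓ₂}(L))`. -/
theorem leak_localization_end_difference (L : ℝ) (hL : 0 < L)
    (F : ℝ → ℝ → ℝ)
    (hF : ∀ ℓ₂ x, F ℓ₂ x = (x ^ 2 + ℓ₂ ^ 2) / (2 * L) + L / 3 - max x ℓ₂) :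
    (∀ ℓ₂ ∈ Set.Icc (0 : ℝ) L, F ℓ₂ 0 - F ℓ₂ L = L / 2 - ℓ₂)
    ∧ Set.InjOn (fun ℓ₂ => F ℓ₂ 0 - F ℓ₂ L) (Set.Icc (0 : ℝ) L)
    ∧ (∀ ℓ₂ ∈ Set.Icc (0 : ℝ) L, ℓ₂ = L / 2 - (F ℓ₂ 0 - F ℓ₂ L)) := by
  have key : ∀ ℓ₂ ∈ Set.Icc (0 : ℝ) L, F ℓ₂ 0 - F ℓ₂ L = L / 2 - ℓ₂ := by
    intro ℓ₂ ⟨h0, h1⟩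
    rw [hF, hF, max_eq_right h0, max_eq_left h1]
    field_simp
    ring
  refine ⟨key, ?_, ?_⟩
  · intro a ha b hb hab
    simp only [key a ha, key b hb] at hab
    linarith
  · intro ℓ₂ h
    rw [key ℓ₂ h]; ring
end

section
/- Let L > 0 and define, for ℓ₂ ∈ [0, L], the leak profile F_{ℓ₂}(x) = (x² + ℓ₂²)/(2L) + L/3 − max(x, ℓ₂). Then F_{ℓ₂}(0) = F_{ℓ₂}(L) if and only if ℓ₂ = L/2, and in that case the common value is F_{L/2}(0) = F_{L/2}(L) = −L/24. -/
/-- Equal end pressure drops characterize a mid-pipeline leak: for the stationary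
leak profile `F_{ℓ₂}(x) = (x²+ℓ₂²)/(2L) + L/3 − max(x,ℓ₂)` with `ℓ₂ ∈ [0,L]`,
`F_{ℓ₂}(0) = F_{ℓ₂}(L)` iff `ℓ₂ = L/2`, and then the common value is `−L/24`. -/
theorem leak_profile_equal_ends_iff_middle (L : ℝ) (hL : 0 < L)
    (F : ℝ → ℝ → ℝ)
    (hF : ∀ ℓ₂ x, F ℓ₂ x = (x ^ 2 + ℓ₂ ^ 2) / (2 * L) + L / 3 - max x ℓ₂) :
    (∀ ℓ₂ ∈ Set.Icc (0 : ℝ) L, F ℓ₂ 0 = F ℓ₂ L ↔ ℓ₂ = L / 2)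
    ∧ F (L / 2) 0 = -L / 24 ∧ F (L / 2) L = -L / 24 := by
  have hL2 : (0:ℝ) ≤ L / 2 := by linarith
  refine ⟨fun ℓ₂ h => ?_, ?_, ?_⟩
  · obtain ⟨h0, hLe⟩ := h
    rw [hF, hF, max_eq_right h0, max_eq_left hLe]
    constructor
    · intro h
      have hne : (2 * L) ≠ 0 := by positivity
      field_simp at h
      nlinarith [h, hL, sq_nonneg (ℓ₂ - L/2)]
    · intro h; subst h; field_simp; ring
  · rw [hF, max_eq_right hL2]
    field_simp; ring
  · rw [hF, max_eq_left (by linarith : L / 2 ≤ L)]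
    field_simp; ring
end
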